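/- Let Γ be a finite nonempty set of d×d matrices over Z_max. Then urk(Γ) = 0 if and only if ρ(Γ) = -∞, i.e., the minimum ultimate rank over the semigroup generated by Γ is zero exactly when some finite product of matrices from Γ has all entries equal to -∞ (mortality of the semigroup). -/

import Mathlib

open Filter

/-- The tropical (max-plus) semiring ℤ ∪ {-∞}: addition is max (lattice sup),
`+` is the tropical product with `⊥` absorbing. -/
abbrev Zmax : Type := WithBot ℤ

/-- Square matrices over `Zmax`. -/
abbrev Mat (d : ℕ) : Type := Fin d → Fin d → Zmax

/-- Tropical matrix product: `(A⊗B) i j = max_k (A i k + B k j)`. -/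
def tmul {d : ℕ} (A B : Mat d) : Mat d :=
  fun i j => Finset.univ.sup fun k => A i k + B k j

/-- Maximal entry of a matrix (`-∞` for the all-`⊥` matrix). -/
def tnorm {d : ℕ} (M : Mat d) : Zmax :=
  Finset.univ.sup fun i => Finset.univ.sup fun j => M i j

/-- Product of a list of matrices (junk value, the all-`⊥` matrix, on `[]`;
only used on nonempty lists). -/
def prodL {d : ℕ} : List (Mat d) → Mat d
  | [] => fun _ _ => ⊥
  | [M] => M
  | M :: N :: L => tmul M (prodL (N :: L))

/-- Tropical identity matrix. -/
def tId (d : ℕ) : Mat d := fun i j => if i = j then (0 : Zmax) else ⊥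

/-- Tropical matrix power. -/
def tpow {d : ℕ} (M : Mat d) : ℕ → Mat d
  | 0 => tId d
  | n+1 => tmul M (tpow M n)

/-- The subsemigroup generated by a set of matrices: all nonempty finite products. -/
def semi {d : ℕ} (Γ : Set (Mat d)) : Set (Mat d) :=
  {M | ∃ L : List (Mat d), L ≠ [] ∧ (∀ N ∈ L, N ∈ Γ) ∧ prodL L = M}

/-- Embedding of `Zmax = ℤ ∪ {-∞}` into `EReal`. -/
noncomputable def z2e (x : Zmax) : EReal :=
  WithBot.recBotCoe ⊥ (fun n : ℤ => ((n : ℝ) : EReal)) x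

/-- `minNorm Γ ℓ` is the minimum over all products of `ℓ` matrices from `Γ`
of `‖M₁⋯M_ℓ‖_∞ / ℓ`, as an extended real. -/
noncomputable def minNorm {d : ℕ} (Γ : Set (Mat d)) (ℓ : ℕ) : EReal :=
  sInf {x | ∃ L : List (Mat d), L.length = ℓ ∧ (∀ N ∈ L, N ∈ Γ) ∧
    x = z2e (tnorm (prodL L)) / (ℓ : EReal)}

/-- Joint spectral radius: `inf_{ℓ>0} min{ ‖M₁⋯M_ℓ‖_∞/ℓ : Mᵢ ∈ Γ }`. -/
noncomputable def jsr {d : ℕ} (Γ : Set (Mat d)) : EReal :=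
  ⨅ (ℓ : ℕ) (_ : 0 < ℓ), minNorm Γ ℓ

/-- Weight of the cycle `c 0 → c 1 → ⋯ → c ℓ → c 0` (length `ℓ+1`),
addition of `Fin (ℓ+1)` being cyclic. -/
def cycWeight {d : ℕ} (M : Mat d) {ℓ : ℕ} (c : Fin (ℓ+1) → Fin d) : Zmax :=
  ∑ k : Fin (ℓ+1), M (c k) (c (k+1))

/-- Tropical spectral radius of a single matrix: the maximal average weight of
cycles in the graph of `M` (and `-∞` if there is no cycle of finite weight). -/
noncomputable def rho {d : ℕ} (M : Mat d) : EReal :=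
  ⨆ (ℓ : ℕ) (c : Fin (ℓ+1) → Fin d), z2e (cycWeight M c) / ((ℓ+1 : ℕ) : EReal)

/-- A critical cycle: a cycle with finite weight whose average weight is `rho M`. -/
def IsCritCycle {d : ℕ} (M : Mat d) {ℓ : ℕ} (c : Fin (ℓ+1) → Fin d) : Prop :=
  cycWeight M c ≠ ⊥ ∧ z2e (cycWeight M c) / ((ℓ+1 : ℕ) : EReal) = rho M

/-- Edges of the critical graph: edges lying on some critical cycle. -/
def critEdge {d : ℕ} (M : Mat d) (i j : Fin d) : Prop :=
  ∃ (ℓ : ℕ) (c : Fin (ℓ+1) → Fin d) (k : Fin (ℓ+1)),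
    IsCritCycle M c ∧ c k = i ∧ c (k+1) = j

/-- Vertices of the critical graph. -/
def critVertex {d : ℕ} (M : Mat d) (i : Fin d) : Prop :=
  ∃ j, critEdge M i j ∨ critEdge M j i

/-- Strongly connected components of the critical graph: maximal sets of critical
vertices that are pairwise connected by paths in the critical graph. -/
def IsSCC {d : ℕ} (M : Mat d) (S : Set (Fin d)) : Prop :=
  (∀ i ∈ S, critVertex M i) ∧
  (∀ i ∈ S, ∀ j ∈ S, Relation.ReflTransGen (critEdge M) i j) ∧
  (∀ T : Set (Fin d), S ⊆ T → (∀ i ∈ T, critVertex M i) →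
    (∀ i ∈ T, ∀ j ∈ T, Relation.ReflTransGen (critEdge M) i j) → T = S)

/-- Greatest common divisor of a set of natural numbers. -/
noncomputable def setGcd (A : Set ℕ) : ℕ :=
  sInf {g | (∀ a ∈ A, g ∣ a) ∧ ∀ h, (∀ a ∈ A, h ∣ a) → h ∣ g}

/-- Cyclicity of a strongly connected component `S` of the critical graph of `M`:
the gcd of the lengths of the cycles of the critical graph lying in `S`. -/
noncomputable def cyclicity {d : ℕ} (M : Mat d) (S : Set (Fin d)) : ℕ :=
  setGcd {n | ∃ (ℓ : ℕ) (c : Fin (ℓ+1) → Fin d), n = ℓ + 1 ∧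
    (∀ k, critEdge M (c k) (c (k+1))) ∧ (∀ k, c k ∈ S)}

/-- Ultimate rank of a matrix: the sum of the cyclicities of the strongly
connected components of its critical graph. -/
noncomputable def urk {d : ℕ} (M : Mat d) : ℕ :=
  ∑ᶠ (S : Set (Fin d)) (_ : IsSCC M S), cyclicity M S

/-- `k ⊙ M`: add the integer `k` to every entry. -/
def kadd {d : ℕ} (k : ℤ) (M : Mat d) : Mat d := fun i j => (k : Zmax) + M i j

/-- Value `I M F` computed from an initial row vector, a matrix and a final
column vector. -/
def runVal {d : ℕ} (I : Fin d → Zmax) (M : Mat d) (F : Fin d → Zmax) : Zmax :=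
  Finset.univ.sup fun i => Finset.univ.sup fun j => I i + M i j + F j

/-!
A matrix has ultimate rank `0` exactly when its graph has no cycle of finite weight. Indeed, a
closed walk of finite weight that revisits a vertex splits into two shorter closed walks, and its
mean weight is a mediant of theirs, so the maximal cycle mean is attained by one of the finitely
many cycles of length at most `d`; that cycle is critical and its strongly connected component
has positive cyclicity. Conversely, without finite cycles every walk of length `d + 1` has weight
`-∞`, so `M ^ (d + 1)`, which lies in the semigroup, has all entries `-∞`.

For the spectral radius, a product with all entries `-∞` has norm `-∞`. Otherwise every product of
`ℓ` generators has a finite entry, which is at least `ℓ * b` when `b` bounds the finite entries of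
the finitely many generators from below, so `ρ(Γ) ≥ b`.
-/

open Finset

section TropicalProduct

variable {d : ℕ}

lemma zmax_add_finset_sup {ι : Type*} (a : Zmax) (s : Finset ι) (f : ι → Zmax) :
    a + s.sup f = s.sup fun i => a + f i :=
  Finset.apply_sup_eq_sup_comp (a + ·) (fun x y => (add_right_mono (a := a)).map_sup x y)
    (WithBot.add_bot a)

lemma zmax_finset_sup_add {ι : Type*} (a : Zmax) (s : Finset ι) (f : ι → Zmax) :
    s.sup f + a = s.sup fun i => f i + a := by
  simp only [add_comm _ a, zmax_add_finset_sup]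

lemma tmul_assoc (A B C : Mat d) : tmul (tmul A B) C = tmul A (tmul B C) := by
  funext i j
  simp only [tmul, zmax_finset_sup_add, zmax_add_finset_sup, add_assoc]
  exact Finset.sup_comm _ _ _

lemma tmul_tId (M : Mat d) : tmul M (tId d) = M := by
  funext i j
  refine le_antisymm (Finset.sup_le fun k _ => ?_) ?_
  · by_cases h : k = j <;> simp [tId, h]
  · calc M i j = M i j + tId d j j := by simp [tId]
      _ ≤ tmul M (tId d) i j := Finset.le_sup (f := fun k => M i k + tId d k j) (mem_univ j)

lemma prodL_cons (M : Mat d) {L : List (Mat d)} (h : L ≠ []) :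
    prodL (M :: L) = tmul M (prodL L) := by
  cases L with
  | nil => exact absurd rfl h
  | cons N L => rfl

lemma prodL_append {L₁ L₂ : List (Mat d)} (h₁ : L₁ ≠ []) (h₂ : L₂ ≠ []) :
    prodL (L₁ ++ L₂) = tmul (prodL L₁) (prodL L₂) := by
  induction L₁ with
  | nil => exact absurd rfl h₁
  | cons M L ih =>
    rcases eq_or_ne L [] with rfl | hL
    · exact prodL_cons M h₂
    · rw [List.cons_append, prodL_cons M (by simp [hL]), ih hL, prodL_cons M hL, tmul_assoc]

lemma tmul_mem_semi {Γ : Set (Mat d)} {A B : Mat d} (hA : A ∈ semi Γ) (hB : B ∈ semi Γ) :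
    tmul A B ∈ semi Γ := by
  obtain ⟨L₁, h₁, hΓ₁, rfl⟩ := hA
  obtain ⟨L₂, h₂, hΓ₂, rfl⟩ := hB
  refine ⟨L₁ ++ L₂, by simp [h₁], fun N hN => ?_, prodL_append h₁ h₂⟩
  rcases List.mem_append.1 hN with h | h
  exacts [hΓ₁ N h, hΓ₂ N h]

lemma tpow_succ_mem_semi {Γ : Set (Mat d)} {M : Mat d} (hM : M ∈ semi Γ) :
    ∀ n, tpow M (n + 1) ∈ semi Γ
  | 0 => by rwa [tpow, tpow, tmul_tId]
  | n + 1 => tmul_mem_semi hM (tpow_succ_mem_semi hM n)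

end TropicalProduct

section ExtendedReals

lemma z2e_mono : Monotone z2e := by
  intro x y h
  induction x using WithBot.recBotCoe with
  | bot => exact bot_le
  | coe a =>
    induction y using WithBot.recBotCoe with
    | bot => exact absurd h (WithBot.not_coe_le_bot a)
    | coe b => exact EReal.coe_le_coe_iff.2 (Int.cast_le.2 (WithBot.coe_le_coe.1 h))

lemma z2e_coe_div_natCast (w : ℤ) (n : ℕ) :
    z2e (w : Zmax) / (n : EReal) = (((w : ℝ) / n : ℝ) : EReal) := by
  rw [EReal.coe_div, EReal.coe_coe_eq_natCast]
  rfl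

lemma z2e_bot_div_succ (n : ℕ) : z2e ⊥ / ((n + 1 : ℕ) : EReal) = ⊥ :=
  EReal.bot_div_of_pos_ne_top (by exact_mod_cast Nat.succ_pos n) (EReal.natCast_ne_top _)

lemma add_div_add_le_max {x y p q : ℝ} (hp : 0 < p) (hq : 0 < q) :
    (x + y) / (p + q) ≤ max (x / p) (y / q) := by
  have hx : x ≤ max (x / p) (y / q) * p := (div_le_iff₀ hp).1 (le_max_left _ _)
  have hy : y ≤ max (x / p) (y / q) * q := (div_le_iff₀ hq).1 (le_max_right _ _)
  rw [div_le_iff₀ (add_pos hp hq)]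
  linarith

lemma z2e_add_div_le_or (a b : Zmax) (m n : ℕ) :
    z2e (a + b) / ((m + n + 1 + 1 : ℕ) : EReal) ≤ z2e a / ((m + 1 : ℕ) : EReal) ∨
      z2e (a + b) / ((m + n + 1 + 1 : ℕ) : EReal) ≤ z2e b / ((n + 1 : ℕ) : EReal) := by
  induction a using WithBot.recBotCoe with
  | bot => exact Or.inl (by rw [WithBot.bot_add, z2e_bot_div_succ]; exact bot_le)
  | coe x =>
    induction b using WithBot.recBotCoe with
    | bot => exact Or.inl (by rw [WithBot.add_bot, z2e_bot_div_succ]; exact bot_le)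
    | coe y =>
      rw [← WithBot.coe_add]
      simp only [z2e_coe_div_natCast, EReal.coe_le_coe_iff]
      refine le_max_iff.1 (le_of_eq_of_le ?_ (add_div_add_le_max (x := x) (y := y)
        (p := (m + 1 : ℕ)) (q := (n + 1 : ℕ)) (by positivity) (by positivity)))
      push_cast
      ring

end ExtendedReals

section Cycles

variable {d : ℕ} (M : Mat d)

noncomputable def cycAvg {ℓ : ℕ} (c : Fin (ℓ + 1) → Fin d) : EReal :=
  z2e (cycWeight M c) / ((ℓ + 1 : ℕ) : EReal)

lemma rho_eq_iSup_cycAvg : rho M = ⨆ (ℓ : ℕ) (c : Fin (ℓ + 1) → Fin d), cycAvg M c := rfl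

lemma cycAvg_eq_bot_iff {ℓ : ℕ} (c : Fin (ℓ + 1) → Fin d) :
    cycAvg M c = ⊥ ↔ cycWeight M c = ⊥ := by
  unfold cycAvg
  induction cycWeight M c using WithBot.recBotCoe with
  | bot => simpa using z2e_bot_div_succ ℓ
  | coe w => rw [z2e_coe_div_natCast]; simp

def closedWalk (p : ℕ → Fin d) (s n : ℕ) : Fin (n + 1) → Fin d := fun k => p (s + k)

lemma cycWeight_closedWalk {p : ℕ → Fin d} {s n : ℕ} (h : p s = p (s + (n + 1))) :
    cycWeight M (closedWalk p s n) = ∑ k ∈ range (n + 1), M (p (s + k)) (p (s + k + 1)) := by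
  rw [cycWeight, ← Fin.sum_univ_eq_sum_range (fun k => M (p (s + k)) (p (s + k + 1)))]
  refine Finset.sum_congr rfl fun k _ => ?_
  simp only [closedWalk, Fin.val_add_one]
  split_ifs with hk
  · simp [hk, h, add_assoc]
  · rfl

lemma cycWeight_rotate {ℓ : ℕ} (c : Fin (ℓ + 1) → Fin d) (t : Fin (ℓ + 1)) :
    cycWeight M (fun k => c (k + t)) = cycWeight M c :=
  Fintype.sum_equiv (Equiv.addRight t) _ _ fun k => by simp [add_right_comm]

lemma cycWeight_closedWalk_add {p : ℕ → Fin d} {s m n : ℕ} (h₁ : p s = p (s + (m + 1)))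
    (h₂ : p (s + (m + 1)) = p (s + (m + 1) + (n + 1))) :
    cycWeight M (closedWalk p s (m + n + 1)) =
      cycWeight M (closedWalk p s m) + cycWeight M (closedWalk p (s + (m + 1)) n) := by
  have h : p s = p (s + (m + n + 1 + 1)) := by
    rw [h₁, h₂]; congr 1; ring
  rw [cycWeight_closedWalk M h, cycWeight_closedWalk M h₁, cycWeight_closedWalk M h₂,
    show m + n + 1 + 1 = (m + 1) + (n + 1) by ring, Finset.sum_range_add]
  simp only [add_assoc]

lemma cycAvg_closedWalk_add_le {p : ℕ → Fin d} {s m n : ℕ} (h₁ : p s = p (s + (m + 1)))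
    (h₂ : p (s + (m + 1)) = p (s + (m + 1) + (n + 1))) :
    cycAvg M (closedWalk p s (m + n + 1)) ≤ cycAvg M (closedWalk p s m) ∨
      cycAvg M (closedWalk p s (m + n + 1)) ≤ cycAvg M (closedWalk p (s + (m + 1)) n) := by
  unfold cycAvg
  rw [cycWeight_closedWalk_add M h₁ h₂]
  exact z2e_add_div_le_or _ _ m n

open Fin.NatCast in
lemma exists_short_cycle_cycAvg_ge {ℓ : ℕ} (c : Fin (ℓ + 1) → Fin d) :
    ∃ (ℓ' : ℕ) (c' : Fin (ℓ' + 1) → Fin d), ℓ' < d ∧ cycAvg M c ≤ cycAvg M c' := by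
  induction ℓ using Nat.strong_induction_on with
  | _ ℓ ih =>
  rcases lt_or_ge ℓ d with hℓ | hℓ
  · exact ⟨ℓ, c, hℓ, le_rfl⟩
  obtain ⟨i, j, hij, hcij⟩ := Fintype.exists_ne_map_eq_of_card_lt c (by simpa using hℓ)
  -- start `c` at the repeated vertex `c i = c j`, where it splits into two closed walks
  set p : ℕ → Fin d := fun k => c ((k : Fin (ℓ + 1)) + i) with hp
  have hrot : cycAvg M c = cycAvg M (closedWalk p 0 ℓ) := by
    have hwalk : closedWalk p 0 ℓ = fun k => c (k + i) :=
      funext fun k => by simp [closedWalk, hp]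
    rw [hwalk, cycAvg, cycAvg, cycWeight_rotate]
  obtain ⟨a, ha⟩ : ∃ a, (j - i).val = a + 1 :=
    Nat.exists_eq_succ_of_ne_zero fun h => hij (sub_eq_zero.1 (Fin.ext h)).symm
  obtain ⟨e, rfl⟩ : ∃ e, ℓ = a + e + 1 := ⟨ℓ - (a + 1), by have := (j - i).isLt; omega⟩
  have h₁ : p 0 = p (0 + (a + 1)) := by
    simp [hp, ← ha, hcij]
  have h₂ : p (0 + (a + 1)) = p (0 + (a + 1) + (e + 1)) := by
    rw [← h₁]
    simp [hp, show a + 1 + (e + 1) = a + e + 1 + 1 by ring]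
  rw [hrot]
  rcases cycAvg_closedWalk_add_le M h₁ h₂ with h | h
  · obtain ⟨ℓ', c', hℓ', hle⟩ := ih a (by omega) (closedWalk p 0 a)
    exact ⟨ℓ', c', hℓ', h.trans hle⟩
  · obtain ⟨ℓ', c', hℓ', hle⟩ := ih e (by omega) (closedWalk p (0 + (a + 1)) e)
    exact ⟨ℓ', c', hℓ', h.trans hle⟩

lemma exists_isCritCycle {ℓ₀ : ℕ} {c₀ : Fin (ℓ₀ + 1) → Fin d} (h₀ : cycWeight M c₀ ≠ ⊥) :
    ∃ (ℓ : ℕ) (c : Fin (ℓ + 1) → Fin d), IsCritCycle M c := by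
  obtain ⟨ℓ₁, c₁, hℓ₁, -⟩ := exists_short_cycle_cycAvg_ge M c₀
  have : Nonempty (Σ ℓ : Fin d, Fin (ℓ.val + 1) → Fin d) := ⟨⟨⟨ℓ₁, hℓ₁⟩, c₁⟩⟩
  obtain ⟨⟨ℓ, c⟩, hmax⟩ := Finite.exists_max fun t : Σ ℓ : Fin d, Fin (ℓ.val + 1) → Fin d =>
    cycAvg M t.2
  have hle : ∀ (ℓ' : ℕ) (c' : Fin (ℓ' + 1) → Fin d), cycAvg M c' ≤ cycAvg M c := by
    intro ℓ' c'
    obtain ⟨ℓ'', c'', hℓ'', hle⟩ := exists_short_cycle_cycAvg_ge M c'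
    exact hle.trans (hmax ⟨⟨ℓ'', hℓ''⟩, c''⟩)
  refine ⟨ℓ, c, fun hc => h₀ ?_, ?_⟩
  · rw [← cycAvg_eq_bot_iff] at hc ⊢
    exact le_bot_iff.1 (hc ▸ hle ℓ₀ c₀)
  · rw [rho_eq_iSup_cycAvg]
    exact le_antisymm (le_iSup₂_of_le ℓ.val c le_rfl) (iSup₂_le hle)

end Cycles

section Walks

variable {d : ℕ} (M : Mat d)

lemma exists_walk_of_tpow_ne_bot : ∀ (n : ℕ) (i j : Fin d), tpow M n i j ≠ ⊥ →
    ∃ p : ℕ → Fin d, p 0 = i ∧ ∀ k < n, M (p k) (p (k + 1)) ≠ ⊥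
  | 0, i, _, _ => ⟨fun _ => i, rfl, by omega⟩
  | n + 1, i, j, h => by
    obtain ⟨k, -, hk⟩ : ∃ k ∈ univ, M i k + tpow M n k j ≠ ⊥ := by
      by_contra! hall
      exact h ((Finset.sup_eq_bot_iff _ _).2 hall)
    obtain ⟨hik, hkj⟩ := WithBot.add_ne_bot.1 hk
    obtain ⟨p, hp0, hp⟩ := exists_walk_of_tpow_ne_bot n k j hkj
    refine ⟨fun | 0 => i | t + 1 => p t, rfl, fun t ht => ?_⟩
    cases t with
    | zero => simpa [hp0] using hik
    | succ t => exact hp t (by omega)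

lemma exists_cycWeight_ne_bot_of_walk (p : ℕ → Fin d)
    (hp : ∀ k < d, M (p k) (p (k + 1)) ≠ ⊥) :
    ∃ (ℓ : ℕ) (c : Fin (ℓ + 1) → Fin d), cycWeight M c ≠ ⊥ := by
  obtain ⟨a, b, hab, hpab⟩ :=
    Fintype.exists_ne_map_eq_of_card_lt (fun t : Fin (d + 1) => p t) (by simp)
  wlog hlt : a < b generalizing a b
  · exact this b a hab.symm hpab.symm (lt_of_le_of_ne (not_lt.1 hlt) hab.symm)
  obtain ⟨n, hn⟩ : ∃ n, b.val = a.val + (n + 1) := ⟨b.val - a.val - 1, by omega⟩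
  refine ⟨n, closedWalk p a n, ?_⟩
  rw [cycWeight_closedWalk M (hn ▸ hpab), ne_eq, WithBot.sum_eq_bot_iff]
  rintro ⟨k, hk, hbot⟩
  exact hp (a + k) (by have := b.isLt; have := Finset.mem_range.1 hk; omega) hbot

end Walks

lemma setGcd_empty : setGcd ∅ = 0 :=
  Nat.sInf_eq_zero.2 (Or.inl ⟨fun _ h => h.elim, fun h _ => dvd_zero h⟩)

lemma exists_setGcd_spec (A : Set ℕ) :
    ∃ g, (∀ a ∈ A, g ∣ a) ∧ ∀ h, (∀ a ∈ A, h ∣ a) → h ∣ g := by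
  obtain ⟨g, hg⟩ := Submodule.IsPrincipal.principal (Ideal.span (((↑) : ℕ → ℤ) '' A))
  refine ⟨g.natAbs, fun a ha => ?_, fun h hh => ?_⟩
  · have : (a : ℤ) ∈ ℤ ∙ g := hg ▸ Ideal.subset_span ⟨a, ha, rfl⟩
    exact Int.natAbs_dvd_natAbs.2 (Ideal.mem_span_singleton.1 this)
  · have hle : Ideal.span (((↑) : ℕ → ℤ) '' A) ≤ Ideal.span {(h : ℤ)} := by
      rw [Ideal.span_le]
      rintro _ ⟨a, ha, rfl⟩
      exact Ideal.mem_span_singleton.2 (Int.natCast_dvd_natCast.2 (hh a ha))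
    have : g ∈ Ideal.span {(h : ℤ)} := hle (hg ▸ Submodule.mem_span_singleton_self g)
    exact Int.natAbs_dvd_natAbs.2 (Ideal.mem_span_singleton.1 this)

lemma setGcd_pos {A : Set ℕ} {a : ℕ} (ha : a ∈ A) (ha0 : a ≠ 0) : 0 < setGcd A := by
  refine Nat.pos_of_ne_zero fun h => ?_
  rcases Nat.sInf_eq_zero.1 h with h0 | hempty
  · exact ha0 (zero_dvd_iff.1 (h0.1 a ha))
  · exact hempty.subset (exists_setGcd_spec A).choose_spec

section CriticalGraph

variable {d : ℕ} {M : Mat d}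

open Relation

lemma reflTransGen_zero_of_cycle {ℓ : ℕ} {c : Fin (ℓ + 1) → Fin d}
    (hc : ∀ k, critEdge M (c k) (c (k + 1))) : ∀ k, ReflTransGen (critEdge M) (c 0) (c k) :=
  Fin.induction .refl fun k ih => Fin.coeSucc_eq_succ ▸ ih.tail (hc k.castSucc)

lemma reflTransGen_of_cycle {ℓ : ℕ} {c : Fin (ℓ + 1) → Fin d}
    (hc : ∀ k, critEdge M (c k) (c (k + 1))) (a b : Fin (ℓ + 1)) :
    ReflTransGen (critEdge M) (c a) (c b) := by
  simpa using reflTransGen_zero_of_cycle (c := fun k => c (k + a))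
    (fun k => by simpa [add_right_comm] using hc (k + a)) (b - a)

lemma isSCC_component {v : Fin d} (hv : critVertex M v) :
    IsSCC M {u | critVertex M u ∧ ReflTransGen (critEdge M) v u ∧
      ReflTransGen (critEdge M) u v} := by
  have hvS : critVertex M v ∧ ReflTransGen (critEdge M) v v ∧ ReflTransGen (critEdge M) v v :=
    ⟨hv, .refl, .refl⟩
  refine ⟨fun u hu => hu.1, fun i hi j hj => hi.2.2.trans hj.2.1, fun T hST hT hTconn => ?_⟩
  exact (Set.Subset.antisymm hST fun u hu =>
    ⟨hT u hu, hTconn v (hST hvS) u hu, hTconn u hu v (hST hvS)⟩).symm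

lemma cyclicity_le_urk {S : Set (Fin d)} (hS : IsSCC M S) : cyclicity M S ≤ urk M := by
  classical
  have : ∑ᶠ (_ : IsSCC M S), cyclicity M S = cyclicity M S := by
    rw [finsum_eq_if, if_pos hS]
  exact this ▸ single_le_finsum (f := fun S => ∑ᶠ (_ : IsSCC M S), cyclicity M S)
    S (Set.toFinite _) fun _ => Nat.zero_le _

lemma urk_ne_zero_of_isCritCycle {ℓ : ℕ} {c : Fin (ℓ + 1) → Fin d} (hc : IsCritCycle M c) :
    urk M ≠ 0 := by
  have hedge : ∀ k, critEdge M (c k) (c (k + 1)) := fun k => ⟨ℓ, c, k, hc, rfl, rfl⟩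
  have hvert : ∀ k, critVertex M (c k) := fun k => ⟨c (k + 1), Or.inl (hedge k)⟩
  have hpos : 0 < cyclicity M {u | critVertex M u ∧ ReflTransGen (critEdge M) (c 0) u ∧
      ReflTransGen (critEdge M) u (c 0)} :=
    setGcd_pos ⟨ℓ, c, rfl, hedge, fun k =>
      ⟨hvert k, reflTransGen_of_cycle hedge 0 k, reflTransGen_of_cycle hedge k 0⟩⟩
      (Nat.succ_ne_zero ℓ)
  exact (hpos.trans_le (cyclicity_le_urk (isSCC_component (hvert 0)))).ne'

lemma urk_eq_zero_of_forall_cycWeight_eq_bot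
    (h : ∀ (ℓ : ℕ) (c : Fin (ℓ + 1) → Fin d), cycWeight M c = ⊥) : urk M = 0 := by
  have hcyc : ∀ S, cyclicity M S = 0 := by
    intro S
    rw [cyclicity, ← setGcd_empty]
    congr 1
    refine Set.eq_empty_of_forall_notMem ?_
    rintro _ ⟨ℓ, c, -, hc, -⟩
    obtain ⟨ℓ', c', -, hcrit, -, -⟩ := hc 0
    exact hcrit.1 (h ℓ' c')
  exact finsum_eq_zero_of_forall_eq_zero fun S => by simp [hcyc]

lemma urk_eq_zero_of_mortal (h : ∀ i j, M i j = ⊥) : urk M = 0 :=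
  urk_eq_zero_of_forall_cycWeight_eq_bot fun _ _ =>
    WithBot.sum_eq_bot_iff.2 ⟨0, mem_univ _, h _ _⟩

lemma tpow_eq_bot_of_urk_eq_zero (h : urk M = 0) (i j : Fin d) : tpow M (d + 1) i j = ⊥ := by
  by_contra hij
  obtain ⟨p, -, hp⟩ := exists_walk_of_tpow_ne_bot M _ i j hij
  obtain ⟨ℓ, c, hc⟩ := exists_cycWeight_ne_bot_of_walk M p fun k hk => hp k (by omega)
  obtain ⟨ℓ', c', hcrit⟩ := exists_isCritCycle M hc
  exact urk_ne_zero_of_isCritCycle hcrit h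

end CriticalGraph

lemma sInf_urk_eq_zero_iff {d : ℕ} {Γ : Set (Mat d)} (hne : Γ.Nonempty) :
    sInf (urk '' semi Γ) = 0 ↔ ∃ M ∈ semi Γ, ∀ i j, M i j = ⊥ := by
  obtain ⟨A, hA⟩ := hne
  have hsemi : (urk '' semi Γ).Nonempty := ⟨_, A, ⟨[A], by simp, by simpa using hA, rfl⟩, rfl⟩
  rw [Nat.sInf_eq_zero, or_iff_left hsemi.ne_empty]
  constructor
  · rintro ⟨M, hM, h0⟩
    exact ⟨tpow M (d + 1), tpow_succ_mem_semi hM d, tpow_eq_bot_of_urk_eq_zero h0⟩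
  · rintro ⟨M, hM, hbot⟩
    exact ⟨M, hM, urk_eq_zero_of_mortal hbot⟩

section JointSpectralRadius

variable {d : ℕ}

def FiniteEntriesGE (A : Mat d) (b : ℤ) : Prop := ∀ i j, A i j ≠ ⊥ → (b : Zmax) ≤ A i j

lemma finiteEntriesGE_tmul {A B : Mat d} {a b : ℤ} (hA : FiniteEntriesGE A a)
    (hB : FiniteEntriesGE B b) : FiniteEntriesGE (tmul A B) (a + b) := by
  intro i j hij
  obtain ⟨k, -, hk⟩ : ∃ k ∈ univ, A i k + B k j ≠ ⊥ := by
    by_contra! hall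
    exact hij ((Finset.sup_eq_bot_iff _ _).2 hall)
  obtain ⟨hik, hkj⟩ := WithBot.add_ne_bot.1 hk
  calc ((a + b : ℤ) : Zmax) ≤ A i k + B k j := by
        rw [WithBot.coe_add]; exact add_le_add (hA i k hik) (hB k j hkj)
    _ ≤ tmul A B i j := Finset.le_sup (f := fun k => A i k + B k j) (mem_univ k)

lemma finiteEntriesGE_prodL {b : ℤ} {L : List (Mat d)} (hL : L ≠ [])
    (hb : ∀ A ∈ L, FiniteEntriesGE A b) : FiniteEntriesGE (prodL L) (L.length * b) := by
  induction L with
  | nil => exact absurd rfl hL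
  | cons A L ih =>
    have hA := hb A List.mem_cons_self
    rcases eq_or_ne L [] with rfl | hL'
    · simpa [prodL] using hA
    · rw [prodL_cons A hL', List.length_cons, Nat.cast_succ, add_mul, one_mul, add_comm]
      exact finiteEntriesGE_tmul hA (ih hL' fun B hB => hb B (List.mem_cons_of_mem A hB))

lemma exists_finiteEntriesGE {Γ : Set (Mat d)} (hfin : Γ.Finite) :
    ∃ b : ℤ, ∀ A ∈ Γ, FiniteEntriesGE A b := by
  have hent : (((↑) : ℤ → Zmax) ⁻¹'
      ((fun x : Mat d × Fin d × Fin d => x.1 x.2.1 x.2.2) '' Γ ×ˢ Set.univ)).Finite :=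
    ((hfin.prod Set.finite_univ).image _).preimage WithBot.coe_injective.injOn
  obtain ⟨b, hb⟩ := hent.bddBelow
  refine ⟨b, fun A hA i j hij => ?_⟩
  obtain ⟨z, hz⟩ := WithBot.ne_bot_iff_exists.1 hij
  rw [← hz]
  exact WithBot.coe_le_coe.2 (hb ⟨(A, i, j), ⟨hA, trivial⟩, hz.symm⟩)

lemma le_tnorm (M : Mat d) (i j : Fin d) : M i j ≤ tnorm M :=
  (Finset.le_sup (f := fun j => M i j) (mem_univ j)).trans
    (Finset.le_sup (f := fun i => univ.sup fun j => M i j) (mem_univ i))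

lemma jsr_eq_bot_of_mortal {Γ : Set (Mat d)} (h : ∃ M ∈ semi Γ, ∀ i j, M i j = ⊥) :
    jsr Γ = ⊥ := by
  obtain ⟨M, ⟨L, hL, hΓ, rfl⟩, hbot⟩ := h
  obtain ⟨n, hn⟩ := Nat.exists_eq_succ_of_ne_zero (List.length_pos_iff.2 hL).ne'
  have hnorm : tnorm (prodL L) = ⊥ := by simp [tnorm, hbot]
  refine le_bot_iff.1 ((iInf₂_le L.length (by omega)).trans (sInf_le ⟨L, rfl, hΓ, ?_⟩))
  rw [hnorm, hn, z2e_bot_div_succ]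

lemma le_jsr {Γ : Set (Mat d)} {b : ℤ} (hb : ∀ A ∈ Γ, FiniteEntriesGE A b)
    (h : ∀ M ∈ semi Γ, ∃ i j, M i j ≠ ⊥) : ((b : ℝ) : EReal) ≤ jsr Γ := by
  refine le_iInf₂ fun ℓ hℓ => le_sInf ?_
  rintro _ ⟨L, rfl, hΓ, rfl⟩
  have hL : L ≠ [] := List.ne_nil_of_length_pos hℓ
  obtain ⟨i, j, hij⟩ := h _ ⟨L, hL, hΓ, rfl⟩
  have hnorm : ((L.length * b : ℤ) : Zmax) ≤ tnorm (prodL L) :=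
    ((finiteEntriesGE_prodL hL fun A hA => hb A (hΓ A hA)) i j hij).trans (le_tnorm _ i j)
  rw [EReal.le_div_iff_mul_le (by exact_mod_cast hℓ) (EReal.natCast_ne_top _)]
  calc ((b : ℝ) : EReal) * (L.length : EReal) = z2e ((L.length * b : ℤ) : Zmax) := by
        change _ = (((L.length * b : ℤ) : ℝ) : EReal)
        rw [← EReal.coe_coe_eq_natCast, ← EReal.coe_mul, Int.cast_mul, Int.cast_natCast, mul_comm]
    _ ≤ z2e (tnorm (prodL L)) := z2e_mono hnorm

lemma jsr_eq_bot_iff {Γ : Set (Mat d)} (hfin : Γ.Finite) :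
    jsr Γ = ⊥ ↔ ∃ M ∈ semi Γ, ∀ i j, M i j = ⊥ := by
  refine ⟨fun h => ?_, jsr_eq_bot_of_mortal⟩
  by_contra! hmortal
  obtain ⟨b, hb⟩ := exists_finiteEntriesGE hfin
  exact EReal.coe_ne_bot _ (le_bot_iff.1 (h ▸ le_jsr hb hmortal))

end JointSpectralRadius

theorem stmt_18 {d : ℕ} (Γ : Set (Mat d)) (hfin : Γ.Finite) (hne : Γ.Nonempty) :
    (sInf (urk '' semi Γ) = 0 ↔ jsr Γ = ⊥) ∧
    (sInf (urk '' semi Γ) = 0 ↔ ∃ M ∈ semi Γ, ∀ i j, M i j = ⊥) :=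
  ⟨(sInf_urk_eq_zero_iff hne).trans (jsr_eq_bot_iff hfin).symm, sInf_urk_eq_zero_iff hne⟩
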